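/- Fix n ≥ 1, smooth per-batch losses E_0, …, E_{n−1} : ℝ^D → ℝ, and θ₀ ∈ ℝ^D. For h > 0 define the modified loss Ẽ_h(θ) = Ē(θ) + (n h / 4) ‖∇Ē(θ)‖² − (h/n) Σ_{μ=1}^{n−1} ⟨∇E_μ(θ), Σ_{τ=0}^{μ−1} ∇E_τ(θ₀)⟩. Then there exist constants C > 0 and h₀ > 0 such that for every h ∈ (0, h₀) and every continuously differentiable φ : [0, n h] → ℝ^D solving φ′(t) = −∇Ẽ_h(φ(t)) with φ(0) = θ₀, one has ‖φ(n h) − θ_n(h)‖ ≤ C h³; that is, n steps of SGD follow the gradient flow of the modified loss Ẽ_h with error of order O(h³). -/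

import Mathlib

open scoped RealInnerProductSpace

/-- SGD iterates: `θ₀` and `θ_{μ+1} = θ_μ - h ∇E_μ(θ_μ)`. -/
noncomputable def sgdIter {D : ℕ} (E : ℕ → EuclideanSpace ℝ (Fin D) → ℝ)
    (h : ℝ) (θ₀ : EuclideanSpace ℝ (Fin D)) : ℕ → EuclideanSpace ℝ (Fin D)
  | 0 => θ₀
  | (μ + 1) => sgdIter E h θ₀ μ - h • gradient (E μ) (sgdIter E h θ₀ μ)

/-- The average loss `Ē = (1/n) ∑ E_μ`. -/
noncomputable def avgLoss {D : ℕ} (n : ℕ) (E : ℕ → EuclideanSpace ℝ (Fin D) → ℝ)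
    (θ : EuclideanSpace ℝ (Fin D)) : ℝ :=
  (1 / (n : ℝ)) * ∑ μ ∈ Finset.range n, E μ θ

/-- The modified loss `Ẽ_h` revealed by BEA for `n` SGD steps, depending on the
initial parameters `θ₀`. -/
noncomputable def modLoss {D : ℕ} (n : ℕ) (E : ℕ → EuclideanSpace ℝ (Fin D) → ℝ)
    (θ₀ : EuclideanSpace ℝ (Fin D)) (h : ℝ) (θ : EuclideanSpace ℝ (Fin D)) : ℝ :=
  avgLoss n E θ + ((n : ℝ) * h / 4) * ‖gradient (avgLoss n E) θ‖ ^ 2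
    - (h / (n : ℝ)) * ∑ μ ∈ Finset.Ico 1 n,
        ⟪gradient (E μ) θ, ∑ τ ∈ Finset.range μ, gradient (E τ) θ₀⟫

open InnerProductSpace Metric Set Filter Topology

section SGDAux

variable {D : ℕ}
local notation "ED" => EuclideanSpace ℝ (Fin D)

lemma contDiff_gradient_top {f : ED → ℝ} (hf : ContDiff ℝ ((⊤:ℕ∞) : WithTop ℕ∞) f) :
    ContDiff ℝ ((⊤:ℕ∞) : WithTop ℕ∞) (gradient f) := by
  have h1 : ContDiff ℝ ((⊤:ℕ∞) : WithTop ℕ∞) (fderiv ℝ f) :=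
    hf.fderiv_right (by exact_mod_cast le_rfl)
  have h2 : gradient f = fun x => (toDual ℝ ED).symm (fderiv ℝ f x) := rfl
  rw [h2]
  exact ((toDual ℝ ED).symm.toContinuousLinearEquiv.toContinuousLinearMap.contDiff).comp h1

lemma gradient_add' {f g : ED → ℝ} {x : ED} (hf : DifferentiableAt ℝ f x)
    (hg : DifferentiableAt ℝ g x) :
    gradient (fun y => f y + g y) x = gradient f x + gradient g x := by
  unfold gradient
  rw [fderiv_fun_add hf hg, map_add]

lemma gradient_const_mul' {f : ED → ℝ} {x : ED} (a : ℝ) (hf : DifferentiableAt ℝ f x) :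
    gradient (fun y => a * f y) x = a • gradient f x := by
  unfold gradient
  rw [fderiv_const_mul hf, map_smul]

lemma gradient_sub' {f g : ED → ℝ} {x : ED} (hf : DifferentiableAt ℝ f x)
    (hg : DifferentiableAt ℝ g x) :
    gradient (fun y => f y - g y) x = gradient f x - gradient g x := by
  unfold gradient
  rw [fderiv_fun_sub hf hg, map_sub]

lemma gradient_finset_sum' {ι : Type*} (s : Finset ι) {f : ι → ED → ℝ} {x : ED}
    (hf : ∀ i ∈ s, DifferentiableAt ℝ (f i) x) :
    gradient (fun y => ∑ i ∈ s, f i y) x = ∑ i ∈ s, gradient (f i) x := by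
  unfold gradient
  rw [fderiv_fun_sum hf, map_sum]

lemma fderiv_gradient_eq {f : ED → ℝ} (hf : ContDiff ℝ ((⊤:ℕ∞) : WithTop ℕ∞) f) (x : ED) :
    fderiv ℝ (gradient f) x =
      ((toDual ℝ ED).symm.toContinuousLinearEquiv.toContinuousLinearMap).comp
        (fderiv ℝ (fderiv ℝ f) x) := by
  have hf' : ContDiff ℝ ((⊤:ℕ∞) : WithTop ℕ∞) (fderiv ℝ f) :=
    hf.fderiv_right (by exact_mod_cast le_rfl)
  have hdf' : DifferentiableAt ℝ (fderiv ℝ f) x :=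
    (hf'.differentiable (by simp)).differentiableAt
  have h2 : gradient f = fun y =>
      ((toDual ℝ ED).symm.toContinuousLinearEquiv.toContinuousLinearMap) (fderiv ℝ f y) := rfl
  rw [h2]
  exact (((toDual ℝ ED).symm.toContinuousLinearEquiv.toContinuousLinearMap).hasFDerivAt.comp x
    hdf'.hasFDerivAt).fderiv

lemma fderiv_gradient_symm {f : ED → ℝ} (hf : ContDiff ℝ ((⊤:ℕ∞) : WithTop ℕ∞) f) (x v w : ED) :
    ⟪fderiv ℝ (gradient f) x v, w⟫ = ⟪fderiv ℝ (gradient f) x w, v⟫ := by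
  have hd1 : Differentiable ℝ f := hf.differentiable (by simp)
  have hf' : ContDiff ℝ ((⊤:ℕ∞) : WithTop ℕ∞) (fderiv ℝ f) :=
    hf.fderiv_right (by exact_mod_cast le_rfl)
  have hdf' : DifferentiableAt ℝ (fderiv ℝ f) x :=
    (hf'.differentiable (by simp)).differentiableAt
  have hsymm : ∀ v w, fderiv ℝ (fderiv ℝ f) x v w = fderiv ℝ (fderiv ℝ f) x w v :=
    second_derivative_symmetric (fun y => (hd1 y).hasFDerivAt) hdf'.hasFDerivAt
  rw [fderiv_gradient_eq hf]
  show ⟪(toDual ℝ ED).symm (fderiv ℝ (fderiv ℝ f) x v), w⟫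
      = ⟪(toDual ℝ ED).symm (fderiv ℝ (fderiv ℝ f) x w), v⟫
  rw [toDual_symm_apply, toDual_symm_apply, hsymm]

lemma hasGradientAt_inner_const {f : ED → ℝ} (hf : ContDiff ℝ ((⊤:ℕ∞) : WithTop ℕ∞) f)
    (c x : ED) :
    HasGradientAt (fun θ => ⟪gradient f θ, c⟫) (fderiv ℝ (gradient f) x c) x := by
  have hGs : ContDiff ℝ ((⊤:ℕ∞) : WithTop ℕ∞) (gradient f) := contDiff_gradient_top hf
  have hG : DifferentiableAt ℝ (gradient f) x :=
    (hGs.differentiable (by simp)).differentiableAt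
  have h1 := (hG.hasFDerivAt).inner ℝ (hasFDerivAt_const c x)
  rw [hasGradientAt_iff_hasFDerivAt]
  convert h1 using 1
  case e'_9 => rfl
  ext w
  simp only [toDual_apply_apply, ContinuousLinearMap.coe_comp', Function.comp_apply,
    ContinuousLinearMap.prod_apply, fderivInnerCLM_apply, ContinuousLinearMap.coe_zero',
    Pi.zero_apply, inner_zero_right, zero_add]
  exact fderiv_gradient_symm hf x c w

lemma hasGradientAt_inner_self {f : ED → ℝ} (hf : ContDiff ℝ ((⊤:ℕ∞) : WithTop ℕ∞) f) (x : ED) :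
    HasGradientAt (fun θ => ⟪gradient f θ, gradient f θ⟫)
      ((2:ℝ) • fderiv ℝ (gradient f) x (gradient f x)) x := by
  have hGs : ContDiff ℝ ((⊤:ℕ∞) : WithTop ℕ∞) (gradient f) := contDiff_gradient_top hf
  have hG : DifferentiableAt ℝ (gradient f) x :=
    (hGs.differentiable (by simp)).differentiableAt
  have h1 := (hG.hasFDerivAt).inner ℝ (hG.hasFDerivAt)
  rw [hasGradientAt_iff_hasFDerivAt]
  convert h1 using 1
  case e'_9 => rfl
  ext w
  simp only [toDual_apply_apply, ContinuousLinearMap.coe_comp', Function.comp_apply,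
    ContinuousLinearMap.prod_apply, fderivInnerCLM_apply, inner_smul_left]
  have h2 : ⟪fderiv ℝ (gradient f) x (gradient f x), w⟫
      = ⟪fderiv ℝ (gradient f) x w, gradient f x⟫ := fderiv_gradient_symm hf x _ w
  rw [map_ofNat]
  ring_nf
  rw [h2, real_inner_comm]
  ring

lemma lip_on {W : Type*} [NormedAddCommGroup W] [NormedSpace ℝ W]
    {g : ED → W} {K : ℝ} (hg : Differentiable ℝ g) {s : Set ED} (hs : Convex ℝ s)
    (hK : ∀ z ∈ s, ‖fderiv ℝ g z‖ ≤ K) {x y : ED} (hx : x ∈ s) (hy : y ∈ s) :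
    ‖g y - g x‖ ≤ K * ‖y - x‖ :=
  hs.norm_image_sub_le_of_norm_hasFDerivWithin_le
    (fun z _ => (hg z).hasFDerivAt.hasFDerivWithinAt) hK hx hy

lemma taylor2 {W : Type*} [NormedAddCommGroup W] [NormedSpace ℝ W]
    {g : ED → W} {K : ℝ} (hg : Differentiable ℝ g)
    (hg' : Differentiable ℝ (fderiv ℝ g)) {s : Set ED} (hs : Convex ℝ s)
    (hK : ∀ z ∈ s, ‖fderiv ℝ (fderiv ℝ g) z‖ ≤ K)
    {x y : ED} (hx : x ∈ s) (hy : y ∈ s) :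
    ‖g y - g x - fderiv ℝ g x (y - x)‖ ≤ K * ‖y - x‖ ^ 2 := by
  have hseg : segment ℝ x y ⊆ s := hs.segment_subset hx hy
  have hzx : ∀ z ∈ segment ℝ x y, ‖z - x‖ ≤ ‖y - x‖ := by
    intro z hz
    rw [segment_eq_image'] at hz
    obtain ⟨t, ht, rfl⟩ := hz
    simp only [add_sub_cancel_left, norm_smul, Real.norm_eq_abs, abs_of_nonneg ht.1]
    nlinarith [norm_nonneg (y - x), ht.2]
  have claim1 : ∀ z ∈ segment ℝ x y, ‖fderiv ℝ g z - fderiv ℝ g x‖ ≤ K * ‖y - x‖ := by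
    intro z hz
    calc ‖fderiv ℝ g z - fderiv ℝ g x‖ ≤ K * ‖z - x‖ :=
          lip_on hg' hs hK hx (hseg hz)
      _ ≤ K * ‖y - x‖ := by
          have hK0 : 0 ≤ K := le_trans (norm_nonneg (fderiv ℝ (fderiv ℝ g) x)) (hK x hx)
          exact mul_le_mul_of_nonneg_left (hzx z hz) hK0
  have hmvt := (convex_segment x y).norm_image_sub_le_of_norm_hasFDerivWithin_le
    (f := fun z => g z - fderiv ℝ g x z) (f' := fun z => fderiv ℝ g z - fderiv ℝ g x)
    (fun z _ => ((hg z).hasFDerivAt.sub ((fderiv ℝ g x).hasFDerivAt)).hasFDerivWithinAt)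
    claim1 (left_mem_segment ℝ x y) (right_mem_segment ℝ x y)
  have heq : g y - fderiv ℝ g x y - (g x - fderiv ℝ g x x)
      = g y - g x - fderiv ℝ g x (y - x) := by
    rw [map_sub]; abel
  rw [heq] at hmvt
  calc ‖g y - g x - fderiv ℝ g x (y - x)‖ ≤ K * ‖y - x‖ * ‖y - x‖ := hmvt
    _ = K * ‖y - x‖ ^ 2 := by ring

end SGDAux

/-- The constant initial-gradient sums `v_μ = ∑_{τ<μ} ∇E_τ(θ₀)`. -/
noncomputable def vsum {D : ℕ} (E : ℕ → EuclideanSpace ℝ (Fin D) → ℝ)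
    (θ₀ : EuclideanSpace ℝ (Fin D)) (μ : ℕ) : EuclideanSpace ℝ (Fin D) :=
  ∑ τ ∈ Finset.range μ, gradient (E τ) θ₀

/-- Second-order coefficient sums for the SGD expansion. -/
noncomputable def wsum {D : ℕ} (E : ℕ → EuclideanSpace ℝ (Fin D) → ℝ)
    (θ₀ : EuclideanSpace ℝ (Fin D)) (μ : ℕ) : EuclideanSpace ℝ (Fin D) :=
  ∑ τ ∈ Finset.range μ, fderiv ℝ (gradient (E τ)) θ₀ (vsum E θ₀ τ)

/-- The `O(h)` part of the modified loss, written with inner products. -/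
noncomputable def Pfun {D : ℕ} (n : ℕ) (E : ℕ → EuclideanSpace ℝ (Fin D) → ℝ)
    (θ₀ θ : EuclideanSpace ℝ (Fin D)) : ℝ :=
  ((n:ℝ)/4) * ⟪gradient (avgLoss n E) θ, gradient (avgLoss n E) θ⟫
    - (1/(n:ℝ)) * ∑ μ ∈ Finset.Ico 1 n, ⟪gradient (E μ) θ, vsum E θ₀ μ⟫

lemma modLoss_eq_Pfun {D : ℕ} (n : ℕ) (E : ℕ → EuclideanSpace ℝ (Fin D) → ℝ)
    (θ₀ : EuclideanSpace ℝ (Fin D)) (h : ℝ) :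
    modLoss n E θ₀ h = fun θ => avgLoss n E θ + h * Pfun n E θ₀ θ := by
  funext θ
  unfold modLoss Pfun vsum
  rw [real_inner_self_eq_norm_sq]
  ring

set_option maxHeartbeats 1000000 in
/-- `n` steps of SGD follow the gradient flow of the modified loss `Ẽ_h` with an
error of order `O(h³)`. -/
theorem sgd_follows_modified_flow {D n : ℕ} (hn : 1 ≤ n)
    (E : ℕ → EuclideanSpace ℝ (Fin D) → ℝ)
    (hE : ∀ μ < n, ContDiff ℝ (⊤ : ℕ∞) (E μ))
    (θ₀ : EuclideanSpace ℝ (Fin D)) :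
    ∃ C > (0 : ℝ), ∃ h₀ > (0 : ℝ), ∀ h ∈ Set.Ioo (0 : ℝ) h₀,
      ∀ φ : ℝ → EuclideanSpace ℝ (Fin D),
        φ 0 = θ₀ →
        (∀ t ∈ Set.Icc (0 : ℝ) ((n : ℝ) * h),
          HasDerivAt φ (-(gradient (modLoss n E θ₀ h) (φ t))) t) →
        ‖φ ((n : ℝ) * h) - sgdIter E h θ₀ n‖ ≤ C * h ^ 3 := by
  classical
  have hE' : ∀ μ < n, ContDiff ℝ ((⊤:ℕ∞) : WithTop ℕ∞) (E μ) :=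
    fun μ hμ => (hE μ hμ).of_le (by simp)
  have htop1 : ((⊤:ℕ∞) : WithTop ℕ∞) ≠ 0 := by simp
  have htops : ((⊤:ℕ∞) : WithTop ℕ∞) + 1 ≤ ((⊤:ℕ∞) : WithTop ℕ∞) := by exact_mod_cast le_rfl
  have havg : ContDiff ℝ ((⊤:ℕ∞) : WithTop ℕ∞) (avgLoss n E) := by
    unfold avgLoss
    exact contDiff_const.mul (ContDiff.sum fun i hi => hE' i (Finset.mem_range.mp hi))
  set Gb : EuclideanSpace ℝ (Fin D) → EuclideanSpace ℝ (Fin D) := gradient (avgLoss n E)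
    with hGbdef
  have hGbs : ContDiff ℝ ((⊤:ℕ∞) : WithTop ℕ∞) Gb := contDiff_gradient_top havg
  have hPs : ContDiff ℝ ((⊤:ℕ∞) : WithTop ℕ∞) (Pfun n E θ₀) := by
    unfold Pfun
    apply ContDiff.sub
    · exact contDiff_const.mul ((contDiff_gradient_top havg).inner ℝ (contDiff_gradient_top havg))
    · refine contDiff_const.mul (ContDiff.sum fun μ hμ => ?_)
      exact (contDiff_gradient_top (hE' μ (Finset.mem_Ico.mp hμ).2)).inner ℝ contDiff_const
  set gP : EuclideanSpace ℝ (Fin D) → EuclideanSpace ℝ (Fin D) := gradient (Pfun n E θ₀)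
    with hgPdef
  have hgPs : ContDiff ℝ ((⊤:ℕ∞) : WithTop ℕ∞) gP := contDiff_gradient_top hPs
  have hGms : ∀ μ, μ < n → ContDiff ℝ ((⊤:ℕ∞) : WithTop ℕ∞) (gradient (E μ)) :=
    fun μ hμ => contDiff_gradient_top (hE' μ hμ)
  -- differentiability
  have dGb : Differentiable ℝ Gb := hGbs.differentiable htop1
  have dGb' : Differentiable ℝ (fderiv ℝ Gb) := (hGbs.fderiv_right htops).differentiable htop1
  have dgP : Differentiable ℝ gP := hgPs.differentiable htop1
  have dgP' : Differentiable ℝ (fderiv ℝ gP) := (hgPs.fderiv_right htops).differentiable htop1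
  have dGm : ∀ μ, μ < n → Differentiable ℝ (gradient (E μ)) :=
    fun μ hμ => (hGms μ hμ).differentiable htop1
  have dGm' : ∀ μ, μ < n → Differentiable ℝ (fderiv ℝ (gradient (E μ))) :=
    fun μ hμ => ((hGms μ hμ).fderiv_right htops).differentiable htop1
  -- the uniform bound on the unit ball
  obtain ⟨M, hM1, bGm, bDGm, bD2Gm, bGb, bDGb, bD2Gb, bgP, bDgP, bD2gP⟩ :
      ∃ M : ℝ, 1 ≤ M
        ∧ (∀ μ < n, ∀ x ∈ closedBall θ₀ 1, ‖gradient (E μ) x‖ ≤ M)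
        ∧ (∀ μ < n, ∀ x ∈ closedBall θ₀ 1, ‖fderiv ℝ (gradient (E μ)) x‖ ≤ M)
        ∧ (∀ μ < n, ∀ x ∈ closedBall θ₀ 1, ‖fderiv ℝ (fderiv ℝ (gradient (E μ))) x‖ ≤ M)
        ∧ (∀ x ∈ closedBall θ₀ 1, ‖Gb x‖ ≤ M)
        ∧ (∀ x ∈ closedBall θ₀ 1, ‖fderiv ℝ Gb x‖ ≤ M)
        ∧ (∀ x ∈ closedBall θ₀ 1, ‖fderiv ℝ (fderiv ℝ Gb) x‖ ≤ M)
        ∧ (∀ x ∈ closedBall θ₀ 1, ‖gP x‖ ≤ M)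
        ∧ (∀ x ∈ closedBall θ₀ 1, ‖fderiv ℝ gP x‖ ≤ M)
        ∧ (∀ x ∈ closedBall θ₀ 1, ‖fderiv ℝ (fderiv ℝ gP) x‖ ≤ M) := by
    set S : EuclideanSpace ℝ (Fin D) → ℝ := fun x =>
      (∑ μ ∈ Finset.range n, (‖gradient (E μ) x‖ + ‖fderiv ℝ (gradient (E μ)) x‖
        + ‖fderiv ℝ (fderiv ℝ (gradient (E μ))) x‖))
      + (‖Gb x‖ + ‖fderiv ℝ Gb x‖ + ‖fderiv ℝ (fderiv ℝ Gb) x‖)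
      + (‖gP x‖ + ‖fderiv ℝ gP x‖ + ‖fderiv ℝ (fderiv ℝ gP) x‖) with hS
    have hcont : Continuous S := by
      apply Continuous.add
      apply Continuous.add
      · apply continuous_finset_sum
        intro μ hμ
        have hμn := Finset.mem_range.mp hμ
        exact (((hGms μ hμn).continuous.norm).add
          (((hGms μ hμn).fderiv_right htops).continuous.norm)).add
          ((((hGms μ hμn).fderiv_right htops).fderiv_right htops).continuous.norm)
      · exact ((hGbs.continuous.norm).add
          ((hGbs.fderiv_right htops).continuous.norm)).add
          (((hGbs.fderiv_right htops).fderiv_right htops).continuous.norm)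
      · exact ((hgPs.continuous.norm).add
          ((hgPs.fderiv_right htops).continuous.norm)).add
          (((hgPs.fderiv_right htops).fderiv_right htops).continuous.norm)
    obtain ⟨C0, hC0⟩ :=
      (isCompact_closedBall θ₀ 1).exists_bound_of_continuousOn hcont.continuousOn
    have hSle : ∀ x ∈ closedBall θ₀ 1, S x ≤ max C0 1 := by
      intro x hx
      calc S x ≤ ‖S x‖ := le_abs_self _
        _ ≤ C0 := hC0 x hx
        _ ≤ max C0 1 := le_max_left _ _
    have hsum_nonneg : ∀ x : EuclideanSpace ℝ (Fin D),
        0 ≤ ∑ μ ∈ Finset.range n, (‖gradient (E μ) x‖ + ‖fderiv ℝ (gradient (E μ)) x‖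
          + ‖fderiv ℝ (fderiv ℝ (gradient (E μ))) x‖) :=
      fun x => Finset.sum_nonneg fun i _ => by positivity
    have hterm : ∀ μ < n, ∀ x ∈ closedBall θ₀ 1,
        ‖gradient (E μ) x‖ + ‖fderiv ℝ (gradient (E μ)) x‖
          + ‖fderiv ℝ (fderiv ℝ (gradient (E μ))) x‖ ≤ max C0 1 := by
      intro μ hμ x hx
      have h1 : ‖gradient (E μ) x‖ + ‖fderiv ℝ (gradient (E μ)) x‖
          + ‖fderiv ℝ (fderiv ℝ (gradient (E μ))) x‖
          ≤ ∑ μ ∈ Finset.range n, (‖gradient (E μ) x‖ + ‖fderiv ℝ (gradient (E μ)) x‖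
            + ‖fderiv ℝ (fderiv ℝ (gradient (E μ))) x‖) :=
        Finset.single_le_sum (f := fun i => ‖gradient (E i) x‖ + ‖fderiv ℝ (gradient (E i)) x‖
            + ‖fderiv ℝ (fderiv ℝ (gradient (E i))) x‖)
          (fun i _ => by positivity) (Finset.mem_range.mpr hμ)
      have h2 := hSle x hx
      simp only [hS] at h2
      have := norm_nonneg (Gb x); have := norm_nonneg (fderiv ℝ Gb x)
      have := norm_nonneg (fderiv ℝ (fderiv ℝ Gb) x)
      have := norm_nonneg (gP x); have := norm_nonneg (fderiv ℝ gP x)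
      have := norm_nonneg (fderiv ℝ (fderiv ℝ gP) x)
      linarith
    have hrest : ∀ x ∈ closedBall θ₀ 1,
        (‖Gb x‖ + ‖fderiv ℝ Gb x‖ + ‖fderiv ℝ (fderiv ℝ Gb) x‖)
        + (‖gP x‖ + ‖fderiv ℝ gP x‖ + ‖fderiv ℝ (fderiv ℝ gP) x‖) ≤ max C0 1 := by
      intro x hx
      have h2 := hSle x hx
      simp only [hS] at h2
      have := hsum_nonneg x
      linarith
    refine ⟨max C0 1, le_max_right _ _, ?_, ?_, ?_, ?_, ?_, ?_, ?_, ?_, ?_⟩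
    · intro μ hμ x hx
      have := hterm μ hμ x hx
      have := norm_nonneg (fderiv ℝ (gradient (E μ)) x)
      have := norm_nonneg (fderiv ℝ (fderiv ℝ (gradient (E μ))) x)
      linarith
    · intro μ hμ x hx
      have := hterm μ hμ x hx
      have := norm_nonneg (gradient (E μ) x)
      have := norm_nonneg (fderiv ℝ (fderiv ℝ (gradient (E μ))) x)
      linarith
    · intro μ hμ x hx
      have := hterm μ hμ x hx
      have := norm_nonneg (gradient (E μ) x)
      have := norm_nonneg (fderiv ℝ (gradient (E μ)) x)
      linarith
    all_goals intro x hx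
    all_goals have h2 := hrest x hx
    all_goals
      have := norm_nonneg (Gb x); have := norm_nonneg (fderiv ℝ Gb x)
      have := norm_nonneg (fderiv ℝ (fderiv ℝ Gb) x)
      have := norm_nonneg (gP x); have := norm_nonneg (fderiv ℝ gP x)
      have := norm_nonneg (fderiv ℝ (fderiv ℝ gP) x)
    all_goals linarith
  -- constants
  have hn1 : (1:ℝ) ≤ (n:ℝ) := by exact_mod_cast hn
  have hMpos : (0:ℝ) < M := lt_of_lt_of_le one_pos hM1
  set c1 : ℝ := n * M with hc1def
  set c2 : ℝ := n * (M * c1) with hc2def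
  set c3 : ℝ := c1 + c2 + 1 with hc3def
  set Ce : ℝ := M * (c2 + c3^2) + 1 with hCedef
  set Mf : ℝ := 2 * M with hMfdef
  have hc1pos : 0 < c1 := by positivity
  have hc2pos : 0 < c2 := by positivity
  have hc3pos : 0 < c3 := by positivity
  have hCepos : 0 < Ce := by positivity
  have hMfpos : 0 < Mf := by positivity
  set X : EuclideanSpace ℝ (Fin D) := fderiv ℝ Gb θ₀ (gP θ₀) with hXdef
  set Y : EuclideanSpace ℝ (Fin D) := fderiv ℝ gP θ₀ (Gb θ₀) with hYdef
  set Z : EuclideanSpace ℝ (Fin D) := fderiv ℝ gP θ₀ (gP θ₀) with hZdef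
  set ρc : ℝ := ((n:ℝ)^2/2) * (‖X‖ + ‖Y‖ + ‖Z‖) + 1 with hρcdef
  have hρcpos : 0 < ρc := by positivity
  set Cfl : ℝ := 6 * Mf^3 * (n:ℝ)^3 with hCfldef
  have hCflpos : 0 < Cfl := by positivity
  set C : ℝ := Cfl + n * Ce + ρc + 1 with hCdef
  have hCpos : 0 < C := by positivity
  set h₀ : ℝ := min 1 (min (1/(2*c3)) (min (1/(n*Ce*M)) (1/(8*M*n)))) with hh₀def
  have hh₀pos : 0 < h₀ := by
    apply lt_min one_pos
    apply lt_min (by positivity)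
    exact lt_min (by positivity) (by positivity)
  refine ⟨C, hCpos, h₀, hh₀pos, ?_⟩
  rintro h ⟨hhpos, hhlt⟩ φ hφ0 hφd
  -- smallness facts
  have hh1 : h ≤ 1 := le_of_lt (lt_of_lt_of_le hhlt (min_le_left _ _))
  have hhc3 : c3 * h ≤ 1/2 := by
    have h1 : h < 1/(2*c3) := lt_of_lt_of_le hhlt ((min_le_right _ _).trans (min_le_left _ _))
    rw [lt_div_iff₀ (by positivity)] at h1
    ring_nf at h1 ⊢
    linarith
  have hhCe : (n:ℝ) * Ce * M * h ≤ 1 := by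
    have h1 : h < 1/((n:ℝ)*Ce*M) := lt_of_lt_of_le hhlt
      ((min_le_right _ _).trans ((min_le_right _ _).trans (min_le_left _ _)))
    rw [lt_div_iff₀ (by positivity)] at h1
    ring_nf at h1 ⊢
    linarith
  have hh8Mn : 8 * M * (n:ℝ) * h ≤ 1 := by
    have h1 : h < 1/(8*M*(n:ℝ)) := lt_of_lt_of_le hhlt
      ((min_le_right _ _).trans ((min_le_right _ _).trans (min_le_right _ _)))
    rw [lt_div_iff₀ (by positivity)] at h1
    ring_nf at h1 ⊢
    linarith
  -- (A) the gradient of the modified loss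
  have dP : Differentiable ℝ (Pfun n E θ₀) := hPs.differentiable htop1
  have davg : Differentiable ℝ (avgLoss n E) := havg.differentiable htop1
  have hgradML : ∀ θ, gradient (modLoss n E θ₀ h) θ = Gb θ + h • gP θ := by
    intro θ
    rw [modLoss_eq_Pfun]
    rw [gradient_add' (davg.differentiableAt) ((dP.differentiableAt).const_mul h),
      gradient_const_mul' h (dP.differentiableAt)]
  -- (C) vsum over all n equals n • Gb θ₀
  have hnne : (n:ℝ) ≠ 0 := by positivity
  have hvn : vsum E θ₀ n = (n:ℝ) • Gb θ₀ := by
    have hGbsum : Gb θ₀ = (1/(n:ℝ)) • ∑ μ ∈ Finset.range n, gradient (E μ) θ₀ := by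
      show gradient (avgLoss n E) θ₀ = _
      unfold avgLoss
      rw [gradient_const_mul' _ (DifferentiableAt.fun_sum fun μ hμ =>
          ((hE' μ (Finset.mem_range.mp hμ)).differentiable htop1).differentiableAt),
        gradient_finset_sum' _ (fun μ hμ =>
          ((hE' μ (Finset.mem_range.mp hμ)).differentiable htop1).differentiableAt)]
    rw [hGbsum, smul_smul, mul_one_div_cancel hnne, one_smul]
    rfl
  -- (B) the key identity from backward error analysis
  have dQ : DifferentiableAt ℝ (fun θ => ⟪Gb θ, Gb θ⟫) θ₀ :=
    (((contDiff_gradient_top havg).inner ℝ (contDiff_gradient_top havg)).differentiable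
      htop1).differentiableAt
  have dR : ∀ μ ∈ Finset.Ico 1 n,
      DifferentiableAt ℝ (fun θ => ⟪gradient (E μ) θ, vsum E θ₀ μ⟫) θ₀ := fun μ hμ =>
    (((hGms μ (Finset.mem_Ico.mp hμ).2).inner ℝ contDiff_const).differentiable
      htop1).differentiableAt
  have keyId : (n:ℝ) • gP θ₀ = ((n:ℝ)^2/2) • fderiv ℝ Gb θ₀ (Gb θ₀) - wsum E θ₀ n := by
    have h1 : gP θ₀ = ((n:ℝ)/4) • ((2:ℝ) • fderiv ℝ Gb θ₀ (Gb θ₀))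
        - (1/(n:ℝ)) • ∑ μ ∈ Finset.Ico 1 n, fderiv ℝ (gradient (E μ)) θ₀ (vsum E θ₀ μ) := by
      show gradient (Pfun n E θ₀) θ₀ = _
      unfold Pfun
      rw [gradient_sub' (dQ.const_mul _) ((DifferentiableAt.fun_sum dR).const_mul _),
        gradient_const_mul' _ dQ, gradient_const_mul' _ (DifferentiableAt.fun_sum dR),
        (hasGradientAt_inner_self havg θ₀).gradient,
        gradient_finset_sum' _ dR,
        Finset.sum_congr rfl (fun μ hμ => (hasGradientAt_inner_const
          (hE' μ (Finset.mem_Ico.mp hμ).2) (vsum E θ₀ μ) θ₀).gradient)]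
    have h2 : wsum E θ₀ n = ∑ μ ∈ Finset.Ico 1 n, fderiv ℝ (gradient (E μ)) θ₀ (vsum E θ₀ μ) := by
      unfold wsum
      rw [Finset.range_eq_Ico, Finset.sum_eq_sum_Ico_succ_bot hn]
      have hv0 : vsum E θ₀ 0 = 0 := by simp [vsum]
      rw [hv0, map_zero, zero_add]
    rw [h1, h2, smul_sub]
    congr 1
    · rw [smul_smul, smul_smul]
      congr 1
      ring
    · rw [smul_smul, mul_one_div_cancel hnne, one_smul]
  -- (D) expansion of the SGD iterates
  have hθ₀B : θ₀ ∈ closedBall θ₀ 1 := mem_closedBall_self zero_le_one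
  have hv : ∀ μ, μ ≤ n → ‖vsum E θ₀ μ‖ ≤ c1 := by
    intro μ hμ
    have hμn : (μ:ℝ) ≤ (n:ℝ) := by exact_mod_cast hμ
    calc ‖vsum E θ₀ μ‖ ≤ ∑ τ ∈ Finset.range μ, ‖gradient (E τ) θ₀‖ := norm_sum_le _ _
      _ ≤ ∑ _τ ∈ Finset.range μ, M := Finset.sum_le_sum fun τ hτ =>
          bGm τ (lt_of_lt_of_le (Finset.mem_range.mp hτ) hμ) θ₀ hθ₀B
      _ = (μ:ℝ) * M := by rw [Finset.sum_const, Finset.card_range, nsmul_eq_mul]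
      _ ≤ c1 := by rw [hc1def]; gcongr
  have hw : ∀ μ, μ ≤ n → ‖wsum E θ₀ μ‖ ≤ c2 := by
    intro μ hμ
    have hμn : (μ:ℝ) ≤ (n:ℝ) := by exact_mod_cast hμ
    calc ‖wsum E θ₀ μ‖ ≤ ∑ τ ∈ Finset.range μ, ‖fderiv ℝ (gradient (E τ)) θ₀ (vsum E θ₀ τ)‖ :=
          norm_sum_le _ _
      _ ≤ ∑ _τ ∈ Finset.range μ, M * c1 := by
          apply Finset.sum_le_sum
          intro τ hτ
          have hτn : τ < n := lt_of_lt_of_le (Finset.mem_range.mp hτ) hμ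
          calc ‖fderiv ℝ (gradient (E τ)) θ₀ (vsum E θ₀ τ)‖
              ≤ ‖fderiv ℝ (gradient (E τ)) θ₀‖ * ‖vsum E θ₀ τ‖ :=
                ContinuousLinearMap.le_opNorm _ _
            _ ≤ M * c1 :=
                mul_le_mul (bDGm τ hτn θ₀ hθ₀B) (hv τ hτn.le) (norm_nonneg _) hMpos.le
      _ = (μ:ℝ) * (M * c1) := by rw [Finset.sum_const, Finset.card_range, nsmul_eq_mul]
      _ ≤ c2 := by rw [hc2def]; gcongr
  have hnCeh : (n:ℝ) * Ce * h ≤ 1 := by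
    have h2 : (n:ℝ) * Ce * h * 1 ≤ (n:ℝ) * Ce * h * M := by
      have : (0:ℝ) ≤ (n:ℝ) * Ce * h := by positivity
      exact mul_le_mul_of_nonneg_left hM1 this
    ring_nf at h2 hhCe ⊢
    linarith
  have hsgd : ∀ μ, μ ≤ n →
      ‖sgdIter E h θ₀ μ - (θ₀ - h • vsum E θ₀ μ + h^2 • wsum E θ₀ μ)‖ ≤ μ * Ce * h^3 := by
    intro μ
    induction μ with
    | zero =>
      intro _
      simp [sgdIter, vsum, wsum]
    | succ k ih =>
      intro hk1
      have hknE : k < n := Nat.lt_of_succ_le hk1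
      have hek := ih hknE.le
      set θk := sgdIter E h θ₀ k with hθkdef
      set vk := vsum E θ₀ k with hvkdef
      set wk := wsum E θ₀ k with hwkdef
      set Bk := fderiv ℝ (gradient (E k)) θ₀ with hBkdef
      set ek : EuclideanSpace ℝ (Fin D) := θk - (θ₀ - h • vk + h ^ 2 • wk) with hekdef
      have hkn : (k:ℝ) ≤ (n:ℝ) := by exact_mod_cast hknE.le
      have hekh : ‖ek‖ ≤ h := by
        have s1 : (k:ℝ) * Ce * h^3 ≤ (n:ℝ) * Ce * h^3 := by gcongr
        have s3 : ((n:ℝ)*Ce*h) * h^2 ≤ 1 * h^2 := by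
          exact mul_le_mul_of_nonneg_right hnCeh (by positivity)
        have s4 : h^2 ≤ h := by
          have := mul_le_mul_of_nonneg_right hh1 hhpos.le
          calc h^2 = h * h := sq h
            _ ≤ 1 * h := this
            _ = h := one_mul h
        calc ‖ek‖ ≤ (k:ℝ) * Ce * h^3 := hek
          _ ≤ (n:ℝ) * Ce * h^3 := s1
          _ = ((n:ℝ) * Ce * h) * h^2 := by ring
          _ ≤ 1 * h^2 := s3
          _ = h^2 := one_mul _
          _ ≤ h := s4
      have hballnorm : ‖θk - θ₀‖ ≤ c3 * h := by
        have hdec : θk - θ₀ = ek + (-(h • vk) + h^2 • wk) := by rw [hekdef]; abel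
        have h2c2 : h^2 * c2 ≤ h * c2 := by
          have s4 : h^2 ≤ h := by
            have := mul_le_mul_of_nonneg_right hh1 hhpos.le
            calc h^2 = h * h := sq h
              _ ≤ 1 * h := this
              _ = h := one_mul h
          exact mul_le_mul_of_nonneg_right s4 hc2pos.le
        calc ‖θk - θ₀‖ = ‖ek + (-(h • vk) + h^2 • wk)‖ := by rw [hdec]
          _ ≤ ‖ek‖ + ‖-(h • vk) + h^2 • wk‖ := norm_add_le _ _
          _ ≤ ‖ek‖ + (‖-(h • vk)‖ + ‖h^2 • wk‖) := by
              have := norm_add_le (-(h • vk)) (h^2 • wk)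
              linarith
          _ = ‖ek‖ + (h * ‖vk‖ + h^2 * ‖wk‖) := by
              rw [norm_neg, norm_smul, norm_smul, Real.norm_eq_abs, Real.norm_eq_abs,
                abs_of_nonneg hhpos.le, abs_of_nonneg (by positivity : (0:ℝ) ≤ h^2)]
          _ ≤ h + (h * c1 + h^2 * c2) := by
              have b1 : h * ‖vk‖ ≤ h * c1 :=
                mul_le_mul_of_nonneg_left (hv k hknE.le) hhpos.le
              have b2 : h^2 * ‖wk‖ ≤ h^2 * c2 :=
                mul_le_mul_of_nonneg_left (hw k hknE.le) (by positivity)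
              linarith
          _ ≤ c3 * h := by rw [hc3def]; ring_nf; ring_nf at h2c2; linarith
      have hballk : θk ∈ closedBall θ₀ 1 := by
        rw [mem_closedBall, dist_eq_norm]
        have h12 : ‖θk - θ₀‖ ≤ 1/2 := le_trans hballnorm hhc3
        linarith
      set R : EuclideanSpace ℝ (Fin D) :=
        gradient (E k) θk - gradient (E k) θ₀ - Bk (θk - θ₀) with hRdef
      have hR : ‖R‖ ≤ M * ‖θk - θ₀‖^2 :=
        taylor2 (dGm k hknE) (dGm' k hknE) (convex_closedBall θ₀ 1) (bD2Gm k hknE) hθ₀B hballk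
      have hRle : ‖R‖ ≤ M * c3^2 * h^2 := by
        calc ‖R‖ ≤ M * ‖θk - θ₀‖^2 := hR
          _ ≤ M * (c3*h)^2 :=
              mul_le_mul_of_nonneg_left
                (pow_le_pow_left₀ (norm_nonneg _) hballnorm 2) hMpos.le
          _ = M * c3^2 * h^2 := by ring
      have hGmk : gradient (E k) θk = gradient (E k) θ₀ + Bk (θk - θ₀) + R := by
        rw [hRdef]; abel
      have hdec2 : θk - θ₀ = ek + (-(h • vk) + h^2 • wk) := by rw [hekdef]; abel
      have hBkdec : Bk (θk - θ₀) = Bk ek - h • Bk vk + h^2 • Bk wk := by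
        rw [hdec2, map_add, map_add, map_neg, map_smul, map_smul]
        abel
      have hvs : vsum E θ₀ (k+1) = vk + gradient (E k) θ₀ := Finset.sum_range_succ _ _
      have hws : wsum E θ₀ (k+1) = wk + Bk vk := Finset.sum_range_succ _ _
      have hss : sgdIter E h θ₀ (k+1) = θk - h • gradient (E k) θk := rfl
      have hstep : sgdIter E h θ₀ (k+1) - (θ₀ - h • vsum E θ₀ (k+1) + h^2 • wsum E θ₀ (k+1))
          = ek - h • R - h • Bk ek - (h^3) • Bk wk := by
        rw [hss, hvs, hws, hGmk, hBkdec, hekdef]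
        module
      rw [hstep]
      have hBkek : ‖Bk ek‖ ≤ M * ((k:ℝ) * Ce * h^3) := by
        calc ‖Bk ek‖ ≤ ‖Bk‖ * ‖ek‖ := ContinuousLinearMap.le_opNorm _ _
          _ ≤ M * ((k:ℝ) * Ce * h^3) :=
              mul_le_mul (bDGm k hknE θ₀ hθ₀B) hek (norm_nonneg _) hMpos.le
      have hBkwk : ‖Bk wk‖ ≤ M * c2 := by
        calc ‖Bk wk‖ ≤ ‖Bk‖ * ‖wk‖ := ContinuousLinearMap.le_opNorm _ _
          _ ≤ M * c2 :=
              mul_le_mul (bDGm k hknE θ₀ hθ₀B) (hw k hknE.le) (norm_nonneg _) hMpos.le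
      have hfin : M * ((k:ℝ) * Ce) * h ≤ 1 := by
        have h1 : M * ((k:ℝ) * Ce) * h ≤ M * ((n:ℝ) * Ce) * h := by gcongr
        ring_nf at h1 hhCe ⊢
        linarith
      have htri : ‖ek - h • R - h • Bk ek - (h^3) • Bk wk‖
          ≤ ‖ek‖ + h * ‖R‖ + h * ‖Bk ek‖ + h^3 * ‖Bk wk‖ := by
        have t1 := norm_sub_le (ek - h • R - h • Bk ek) ((h^3) • Bk wk)
        have t2 := norm_sub_le (ek - h • R) (h • Bk ek)
        have t3 := norm_sub_le ek (h • R)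
        rw [norm_smul, Real.norm_eq_abs, abs_of_nonneg hhpos.le] at t2 t3
        rw [norm_smul, Real.norm_eq_abs, abs_of_nonneg (by positivity : (0:ℝ) ≤ h^3)] at t1
        linarith
      calc ‖ek - h • R - h • Bk ek - (h^3) • Bk wk‖
          ≤ ‖ek‖ + h * ‖R‖ + h * ‖Bk ek‖ + h^3 * ‖Bk wk‖ := htri
        _ ≤ (k:ℝ) * Ce * h^3 + h * (M * c3^2 * h^2) + h * (M * ((k:ℝ) * Ce * h^3))
            + h^3 * (M * c2) := by
            have b1 : h * ‖R‖ ≤ h * (M * c3^2 * h^2) := mul_le_mul_of_nonneg_left hRle hhpos.le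
            have b2 : h * ‖Bk ek‖ ≤ h * (M * ((k:ℝ) * Ce * h^3)) :=
              mul_le_mul_of_nonneg_left hBkek hhpos.le
            have b3 : h^3 * ‖Bk wk‖ ≤ h^3 * (M * c2) :=
              mul_le_mul_of_nonneg_left hBkwk (by positivity)
            linarith [hek]
        _ ≤ ((k:ℕ)+1 : ℕ) * Ce * h^3 := by
            push_cast
            have hCe' : M * c3^2 + M * c2 + 1 ≤ Ce := by rw [hCedef]; ring_nf; linarith
            have Q : h^3 * (M * c3^2 + M * c2 + 1) ≤ h^3 * Ce :=
              mul_le_mul_of_nonneg_left hCe' (by positivity)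
            have R2 : M * ((k:ℝ) * Ce) * h * h^3 ≤ 1 * h^3 :=
              mul_le_mul_of_nonneg_right hfin (by positivity)
            ring_nf at Q R2 ⊢
            linarith
  -- (E) the gradient flow of the modified loss
  set T : ℝ := (n:ℝ) * h with hTdef
  have hTpos : 0 < T := by positivity
  set Fh : EuclideanSpace ℝ (Fin D) → EuclideanSpace ℝ (Fin D) := fun θ => Gb θ + h • gP θ
    with hFhdef
  have hφd' : ∀ t ∈ Icc (0:ℝ) T, HasDerivAt φ (-(Fh (φ t))) t := by
    intro t ht
    have h1 := hφd t ht
    rw [hgradML] at h1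
    exact h1
  have dFh : Differentiable ℝ Fh := dGb.add (dgP.const_smul h)
  have hfderivFh : fderiv ℝ Fh = fun x => fderiv ℝ Gb x + h • fderiv ℝ gP x := by
    funext x
    rw [hFhdef]
    rw [fderiv_fun_add (g := fun y => h • gP y) (dGb x) ((dgP x).const_smul h), fderiv_fun_const_smul (dgP x) h]
  have dFh' : Differentiable ℝ (fderiv ℝ Fh) := by
    rw [hfderivFh]
    exact dGb'.add (dgP'.const_smul h)
  have bFh : ∀ x ∈ closedBall θ₀ 1, ‖Fh x‖ ≤ Mf := by
    intro x hx
    calc ‖Fh x‖ ≤ ‖Gb x‖ + ‖h • gP x‖ := norm_add_le _ _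
      _ ≤ M + 1 * M := by
          rw [norm_smul, Real.norm_eq_abs, abs_of_nonneg hhpos.le]
          have b2 : h * ‖gP x‖ ≤ 1 * M :=
            mul_le_mul hh1 (bgP x hx) (norm_nonneg _) zero_le_one
          linarith [bGb x hx]
      _ = Mf := by rw [hMfdef]; ring
  have bDFh : ∀ x ∈ closedBall θ₀ 1, ‖fderiv ℝ Fh x‖ ≤ Mf := by
    intro x hx
    rw [hfderivFh]
    calc ‖fderiv ℝ Gb x + h • fderiv ℝ gP x‖
        ≤ ‖fderiv ℝ Gb x‖ + ‖h • fderiv ℝ gP x‖ := norm_add_le _ _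
      _ ≤ M + 1 * M := by
          rw [norm_smul, Real.norm_eq_abs, abs_of_nonneg hhpos.le]
          have b2 : h * ‖fderiv ℝ gP x‖ ≤ 1 * M :=
            mul_le_mul hh1 (bDgP x hx) (norm_nonneg _) zero_le_one
          linarith [bDGb x hx]
      _ = Mf := by rw [hMfdef]; ring
  have bD2Fh : ∀ x ∈ closedBall θ₀ 1, ‖fderiv ℝ (fderiv ℝ Fh) x‖ ≤ Mf := by
    intro x hx
    rw [hfderivFh]
    rw [fderiv_fun_add (g := fun y => h • fderiv ℝ gP y) (dGb' x) ((dgP' x).const_smul h), fderiv_fun_const_smul (dgP' x) h]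
    calc ‖fderiv ℝ (fderiv ℝ Gb) x + h • fderiv ℝ (fderiv ℝ gP) x‖
        ≤ ‖fderiv ℝ (fderiv ℝ Gb) x‖ + ‖h • fderiv ℝ (fderiv ℝ gP) x‖ :=
          norm_add_le (fderiv ℝ (fderiv ℝ Gb) x) (h • fderiv ℝ (fderiv ℝ gP) x)
      _ ≤ M + 1 * M := by
          have hs := ContinuousLinearMap.opNorm_smul_le h (fderiv ℝ (fderiv ℝ gP) x)
          rw [Real.norm_eq_abs, abs_of_nonneg hhpos.le] at hs
          have b2 : h * ‖fderiv ℝ (fderiv ℝ gP) x‖ ≤ 1 * M :=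
            mul_le_mul hh1 (bD2gP x hx) (norm_nonneg (fderiv ℝ (fderiv ℝ gP) x)) zero_le_one
          linarith [bD2Gb x hx]
      _ = Mf := by rw [hMfdef]; ring
  have h2MfT : 2 * Mf * T ≤ 1/2 := by
    have e1 : 2 * Mf * T = (8 * M * (n:ℝ) * h) / 2 := by rw [hMfdef, hTdef]; ring
    rw [e1]
    linarith [hh8Mn]
  -- the flow stays close to θ₀
  have hstay : ∀ t ∈ Icc (0:ℝ) T, ‖φ t - θ₀‖ ≤ 2 * Mf * t := by
    have hsub : Icc (0:ℝ) T ⊆ {t : ℝ | ‖φ t - θ₀‖ ≤ 2 * Mf * t} := by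
      apply IsClosed.Icc_subset_of_forall_exists_gt
      · have hφc : ContinuousOn (fun t => ‖φ t - θ₀‖ - 2 * Mf * t) (Icc (0:ℝ) T) := by
          apply ContinuousOn.sub
          · exact (ContinuousOn.sub
              (fun t ht => (hφd' t ht).continuousAt.continuousWithinAt)
              continuousOn_const).norm
          · exact (continuous_const.mul continuous_id).continuousOn
        have hcl : IsClosed (Icc (0:ℝ) T ∩
            (fun t => ‖φ t - θ₀‖ - 2 * Mf * t) ⁻¹' (Iic (0:ℝ))) :=
          hφc.preimage_isClosed_of_isClosed isClosed_Icc isClosed_Iic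
        have hset : {t : ℝ | ‖φ t - θ₀‖ ≤ 2 * Mf * t} ∩ Icc 0 T
            = Icc (0:ℝ) T ∩ (fun t => ‖φ t - θ₀‖ - 2 * Mf * t) ⁻¹' (Iic 0) := by
          ext t
          simp only [Set.mem_inter_iff, Set.mem_setOf_eq, Set.mem_preimage, Set.mem_Iic,
            sub_nonpos, and_comm]
        rw [hset]
        exact hcl
      · show ‖φ 0 - θ₀‖ ≤ 2 * Mf * 0
        simp [hφ0]
      · rintro x ⟨hxs, hx0, hxT⟩ y hy
        have hxI : x ∈ Icc (0:ℝ) T := ⟨hx0, hxT.le⟩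
        have hxs' : ‖φ x - θ₀‖ ≤ 2 * Mf * x := hxs
        have h2Mfx : 2 * Mf * x ≤ 2 * Mf * T := by
          have : (0:ℝ) ≤ 2 * Mf := by positivity
          exact mul_le_mul_of_nonneg_left hxT.le this
        have hφxB : φ x ∈ closedBall θ₀ 1 := by
          rw [mem_closedBall, dist_eq_norm]
          linarith
        have hd := hφd' x hxI
        have hlittle := Asymptotics.IsLittleO.def (hasDerivAt_iff_isLittleO.mp hd) hMfpos
        rw [Metric.eventually_nhds_iff] at hlittle
        obtain ⟨δ, hδpos, hδ⟩ := hlittle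
        set u := min (x + δ/2) y with hudef
        have hxu : x < u := lt_min (by linarith) hy
        have huy : u ≤ y := min_le_right _ _
        have hud : dist u x < δ := by
          rw [Real.dist_eq, abs_of_pos (sub_pos.mpr hxu)]
          have hu1 : u ≤ x + δ/2 := min_le_left _ _
          linarith
        have hbnd := hδ hud
        have hnormd : ‖Fh (φ x)‖ ≤ Mf := bFh _ hφxB
        refine ⟨u, ?_, hxu, huy⟩
        show ‖φ u - θ₀‖ ≤ 2 * Mf * u
        have hux : ‖u - x‖ = u - x := by
          rw [Real.norm_eq_abs, abs_of_pos (sub_pos.mpr hxu)]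
        have t0 : ‖(u - x) • (-(Fh (φ x)))‖ ≤ (u - x) * Mf := by
          rw [norm_smul, hux, norm_neg]
          exact mul_le_mul_of_nonneg_left hnormd (sub_pos.mpr hxu).le
        have t1 : ‖φ u - φ x‖ ≤ Mf * ‖u - x‖ + ‖(u - x) • (-(Fh (φ x)))‖ := by
          have hde : φ u - φ x
              = (φ u - φ x - (u - x) • (-(Fh (φ x)))) + (u - x) • (-(Fh (φ x))) := by abel
          calc ‖φ u - φ x‖
              = ‖(φ u - φ x - (u - x) • (-(Fh (φ x)))) + (u - x) • (-(Fh (φ x)))‖ := by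
                rw [← hde]
            _ ≤ ‖φ u - φ x - (u - x) • (-(Fh (φ x)))‖ + ‖(u - x) • (-(Fh (φ x)))‖ :=
                norm_add_le _ _
            _ ≤ Mf * ‖u - x‖ + ‖(u - x) • (-(Fh (φ x)))‖ := by
                exact add_le_add_left hbnd _
        have t2 : ‖φ u - θ₀‖ ≤ ‖φ x - θ₀‖ + ‖φ u - φ x‖ := by
          have hde : φ u - θ₀ = (φ x - θ₀) + (φ u - φ x) := by abel
          rw [hde]
          exact norm_add_le _ _
        rw [hux] at t1
        have hfin : 2 * Mf * x + (Mf * (u - x) + (u - x) * Mf) = 2 * Mf * u := by ring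
        linarith
    intro t ht
    exact hsub ht
  have hφB : ∀ t ∈ Icc (0:ℝ) T, φ t ∈ closedBall θ₀ 1 := by
    intro t ht
    rw [mem_closedBall, dist_eq_norm]
    have h1 := hstay t ht
    have h2 : 2 * Mf * t ≤ 2 * Mf * T :=
      mul_le_mul_of_nonneg_left ht.2 (by positivity)
    linarith
  -- first-order estimate for the flow
  set Fθ : EuclideanSpace ℝ (Fin D) := Fh θ₀ with hFθdef
  set Cψ : ℝ := Mf * (2 * Mf * T) with hCψdef
  have hψ : ∀ t ∈ Icc (0:ℝ) T, ‖φ t - θ₀ + t • Fθ‖ ≤ Cψ * t := by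
    have hder : ∀ t ∈ Icc (0:ℝ) T, HasDerivWithinAt (fun t => φ t + t • Fθ)
        (-(Fh (φ t)) + Fθ) (Icc (0:ℝ) T) t := by
      intro t ht
      exact ((hφd' t ht).hasDerivWithinAt).add
        (by simpa using ((hasDerivAt_id t).smul_const Fθ).hasDerivWithinAt)
    have hbound : ∀ t ∈ Ico (0:ℝ) T, ‖-(Fh (φ t)) + Fθ‖ ≤ Cψ := by
      intro t ht
      have htI : t ∈ Icc (0:ℝ) T := ⟨ht.1, ht.2.le⟩
      have h1 : ‖Fh θ₀ - Fh (φ t)‖ ≤ Mf * ‖θ₀ - φ t‖ :=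
        lip_on dFh (convex_closedBall θ₀ 1) bDFh (hφB t htI) hθ₀B
      rw [norm_sub_rev θ₀ (φ t)] at h1
      have h2 : ‖φ t - θ₀‖ ≤ 2 * Mf * t := hstay t htI
      have h3 : 2 * Mf * t ≤ 2 * Mf * T :=
        mul_le_mul_of_nonneg_left ht.2.le (by positivity)
      have h4 : -(Fh (φ t)) + Fθ = Fh θ₀ - Fh (φ t) := by rw [hFθdef]; abel
      rw [h4, hCψdef]
      calc ‖Fh θ₀ - Fh (φ t)‖ ≤ Mf * ‖φ t - θ₀‖ := h1
        _ ≤ Mf * (2 * Mf * T) := by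
            apply mul_le_mul_of_nonneg_left _ hMfpos.le
            linarith
    have hmvt := norm_image_sub_le_of_norm_deriv_le_segment' hder hbound
    intro t ht
    have h2 := hmvt t ht
    have h0 : φ 0 + (0:ℝ) • Fθ = θ₀ := by simp [hφ0]
    rw [h0] at h2
    have he : φ t + t • Fθ - θ₀ = φ t - θ₀ + t • Fθ := by abel
    rw [he] at h2
    calc ‖φ t - θ₀ + t • Fθ‖ ≤ Cψ * (t - 0) := h2
      _ = Cψ * t := by ring
  -- second-order estimate for the flow
  set DF := fderiv ℝ Fh θ₀ with hDFdef
  have hDFn : ‖DF‖ ≤ Mf := bDFh θ₀ hθ₀B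
  set DFF : EuclideanSpace ℝ (Fin D) := DF Fθ with hDFFdef
  set Cχ : ℝ := 6 * Mf^3 * T^2 with hCχdef
  have hχ : ‖φ T - θ₀ + T • Fθ - (T^2/2) • DFF‖ ≤ Cχ * T := by
    have hder : ∀ t ∈ Icc (0:ℝ) T, HasDerivWithinAt
        (fun t => φ t + t • Fθ - (t^2/2) • DFF)
        (-(Fh (φ t)) + Fθ - t • DFF) (Icc (0:ℝ) T) t := by
      intro t ht
      have hq : HasDerivAt (fun t : ℝ => (t^2/2) • DFF) (t • DFF) t := by
        have h1 : HasDerivAt (fun t : ℝ => t^2/2) t t := by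
          have h2 := (hasDerivAt_pow 2 t).div_const 2
          convert h2 using 1
          case e'_4 => rfl
          case e'_5 => rfl
          push_cast
          ring
        exact h1.smul_const DFF
      exact (((hφd' t ht).hasDerivWithinAt).add
        (by simpa using ((hasDerivAt_id t).smul_const Fθ).hasDerivWithinAt)).sub
        hq.hasDerivWithinAt
    have hbound : ∀ t ∈ Ico (0:ℝ) T, ‖-(Fh (φ t)) + Fθ - t • DFF‖ ≤ Cχ := by
      intro t ht
      have htI : t ∈ Icc (0:ℝ) T := ⟨ht.1, ht.2.le⟩
      have hTay : ‖Fh (φ t) - Fh θ₀ - fderiv ℝ Fh θ₀ (φ t - θ₀)‖ ≤ Mf * ‖φ t - θ₀‖^2 :=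
        taylor2 dFh dFh' (convex_closedBall θ₀ 1) bD2Fh hθ₀B (hφB t htI)
      have hψt := hψ t htI
      have hDFψ : ‖DF (φ t - θ₀ + t • Fθ)‖ ≤ Mf * (Cψ * t) := by
        calc ‖DF (φ t - θ₀ + t • Fθ)‖ ≤ ‖DF‖ * ‖φ t - θ₀ + t • Fθ‖ :=
              ContinuousLinearMap.le_opNorm _ _
          _ ≤ Mf * (Cψ * t) := mul_le_mul hDFn hψt (norm_nonneg _) hMfpos.le
      have hid : -(Fh (φ t)) + Fθ - t • DFF
          = -(Fh (φ t) - Fh θ₀ - fderiv ℝ Fh θ₀ (φ t - θ₀)) - DF (φ t - θ₀ + t • Fθ) := by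
        have e1 : DF (φ t - θ₀ + t • Fθ) = DF (φ t - θ₀) + t • DFF := by
          rw [map_add, map_smul, hDFFdef]
        rw [e1, hFθdef, hDFdef]
        abel
      rw [hid]
      have htT : t ≤ T := ht.2.le
      have hst : ‖φ t - θ₀‖ ≤ 2 * Mf * T := by
        have h1 := hstay t htI
        have h2 : 2 * Mf * t ≤ 2 * Mf * T :=
          mul_le_mul_of_nonneg_left htT (by positivity)
        linarith
      have b1 : Mf * ‖φ t - θ₀‖^2 ≤ Mf * (2*Mf*T)^2 :=
        mul_le_mul_of_nonneg_left (pow_le_pow_left₀ (norm_nonneg _) hst 2) hMfpos.le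
      have b2 : Mf * (Cψ * t) ≤ Mf * (Cψ * T) := by
        apply mul_le_mul_of_nonneg_left _ hMfpos.le
        exact mul_le_mul_of_nonneg_left htT (by positivity)
      have heq : Mf * (2*Mf*T)^2 + Mf * (Mf * (2 * Mf * T) * T) = Cχ := by
        rw [hCχdef]; ring
      calc ‖-(Fh (φ t) - Fh θ₀ - fderiv ℝ Fh θ₀ (φ t - θ₀)) - DF (φ t - θ₀ + t • Fθ)‖
          ≤ ‖-(Fh (φ t) - Fh θ₀ - fderiv ℝ Fh θ₀ (φ t - θ₀))‖ + ‖DF (φ t - θ₀ + t • Fθ)‖ :=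
            norm_sub_le _ _
        _ = ‖Fh (φ t) - Fh θ₀ - fderiv ℝ Fh θ₀ (φ t - θ₀)‖ + ‖DF (φ t - θ₀ + t • Fθ)‖ := by
            rw [norm_neg]
        _ ≤ Mf * ‖φ t - θ₀‖^2 + Mf * (Cψ * t) := add_le_add hTay hDFψ
        _ ≤ Mf * (2*Mf*T)^2 + Mf * (Cψ * T) := add_le_add b1 b2
        _ = Cχ := by rw [hCψdef] at *; exact heq
    have hmvt := norm_image_sub_le_of_norm_deriv_le_segment' hder hbound
    have h2 := hmvt T (right_mem_Icc.mpr hTpos.le)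
    have h0 : φ 0 + (0:ℝ) • Fθ - ((0:ℝ)^2/2) • DFF = θ₀ := by simp [hφ0]
    rw [h0] at h2
    have he : φ T + T • Fθ - (T^2/2) • DFF - θ₀ = φ T - θ₀ + T • Fθ - (T^2/2) • DFF := by abel
    rw [he] at h2
    calc ‖φ T - θ₀ + T • Fθ - (T^2/2) • DFF‖ ≤ Cχ * (T - 0) := h2
      _ = Cχ * T := by ring
  -- final assembly
  have hsgdn := hsgd n le_rfl
  have e0 : Fθ = Gb θ₀ + h • gP θ₀ := rfl
  have e1 : DFF = fderiv ℝ Gb θ₀ (Gb θ₀) + h • X + h • Y + (h*h) • Z := by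
    rw [hDFFdef, hDFdef, hfderivFh, e0]
    show (fderiv ℝ Gb θ₀ + h • fderiv ℝ gP θ₀) (Gb θ₀ + h • gP θ₀) = _
    rw [ContinuousLinearMap.add_apply, ContinuousLinearMap.smul_apply, map_add, map_add,
      map_smul, map_smul, hXdef, hYdef, hZdef]
    module
  have e2 : wsum E θ₀ n = ((n:ℝ)^2/2) • fderiv ℝ Gb θ₀ (Gb θ₀) - (n:ℝ) • gP θ₀ := by
    have h9 := keyId
    rw [eq_sub_iff_add_eq] at h9
    rw [← h9]
    abel
  have hbra : θ₀ - T • Fθ + (T^2/2) • DFF - (θ₀ - h • vsum E θ₀ n + h^2 • wsum E θ₀ n)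
      = ((n:ℝ)^2 * h^3/2) • (X + Y) + ((n:ℝ)^2 * h^4/2) • Z := by
    rw [hTdef, hvn, e0, e1, e2]
    module
  have hdecomp : φ T - sgdIter E h θ₀ n
      = (φ T - θ₀ + T • Fθ - (T^2/2) • DFF)
        - (sgdIter E h θ₀ n - (θ₀ - h • vsum E θ₀ n + h^2 • wsum E θ₀ n))
        + (θ₀ - T • Fθ + (T^2/2) • DFF - (θ₀ - h • vsum E θ₀ n + h^2 • wsum E θ₀ n)) := by
    abel
  have hbran : ‖θ₀ - T • Fθ + (T^2/2) • DFF - (θ₀ - h • vsum E θ₀ n + h^2 • wsum E θ₀ n)‖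
      ≤ ρc * h^3 := by
    rw [hbra]
    have hb1 : ‖((n:ℝ)^2 * h^3/2) • (X + Y)‖ ≤ ((n:ℝ)^2 * h^3/2) * (‖X‖ + ‖Y‖) := by
      rw [norm_smul, Real.norm_eq_abs, abs_of_nonneg (by positivity)]
      exact mul_le_mul_of_nonneg_left (norm_add_le _ _) (by positivity)
    have hb2 : ‖((n:ℝ)^2 * h^4/2) • Z‖ ≤ ((n:ℝ)^2 * h^3/2) * ‖Z‖ := by
      rw [norm_smul, Real.norm_eq_abs, abs_of_nonneg (by positivity)]
      apply mul_le_mul_of_nonneg_right _ (norm_nonneg _)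
      have h43 : h^4 ≤ h^3 := pow_le_pow_of_le_one hhpos.le hh1 (by norm_num)
      have h44 := mul_le_mul_of_nonneg_left h43 (show (0:ℝ) ≤ (n:ℝ)^2 by positivity)
      linarith
    calc ‖((n:ℝ)^2 * h^3/2) • (X + Y) + ((n:ℝ)^2 * h^4/2) • Z‖
        ≤ ‖((n:ℝ)^2 * h^3/2) • (X + Y)‖ + ‖((n:ℝ)^2 * h^4/2) • Z‖ := norm_add_le _ _
      _ ≤ ((n:ℝ)^2 * h^3/2) * (‖X‖ + ‖Y‖) + ((n:ℝ)^2 * h^3/2) * ‖Z‖ := add_le_add hb1 hb2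
      _ = ((n:ℝ)^2/2 * (‖X‖ + ‖Y‖ + ‖Z‖)) * h^3 := by ring
      _ ≤ ρc * h^3 := by
          have h9 : ((n:ℝ)^2/2 * (‖X‖ + ‖Y‖ + ‖Z‖)) ≤ ρc := by rw [hρcdef]; linarith
          exact mul_le_mul_of_nonneg_right h9 (by positivity)
  have hχ' : ‖φ T - θ₀ + T • Fθ - (T^2/2) • DFF‖ ≤ Cfl * h^3 := by
    have e3 : Cχ * T = Cfl * h^3 := by rw [hCχdef, hCfldef, hTdef, hMfdef]; ring
    rw [← e3]
    exact hχ
  calc ‖φ T - sgdIter E h θ₀ n‖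
      ≤ ‖φ T - θ₀ + T • Fθ - (T^2/2) • DFF‖
        + ‖sgdIter E h θ₀ n - (θ₀ - h • vsum E θ₀ n + h^2 • wsum E θ₀ n)‖
        + ‖θ₀ - T • Fθ + (T^2/2) • DFF - (θ₀ - h • vsum E θ₀ n + h^2 • wsum E θ₀ n)‖ := by
        rw [hdecomp]
        exact (norm_add_le _ _).trans (add_le_add_left (norm_sub_le _ _) _)
    _ ≤ Cfl * h^3 + (n:ℝ) * Ce * h^3 + ρc * h^3 := by
        exact add_le_add (add_le_add hχ' hsgdn) hbran
    _ = (Cfl + (n:ℝ) * Ce + ρc) * h^3 := by ring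
    _ ≤ C * h^3 := by
        have h9 : Cfl + (n:ℝ) * Ce + ρc ≤ C := by rw [hCdef]; linarith
        exact mul_le_mul_of_nonneg_right h9 (by positivity)
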